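/- Let $(G,\sigma)$ be a properly colored graph with a hub-vertex $x$, and let $F$ be a set of unordered vertex pairs of minimum cardinality such that $(G \triangle F, \sigma)$ is an hc-cograph. Then $F$ contains no pair incident to $x$. -/

import Mathlib

/-
Proof idea: let `F₀` be `F` without the pairs through `x`. Since `x` is a hub of a properly
colored graph, its color is unique, so deleting `x` from the hc-cograph `G △ F` leaves an
hc-cograph on `V ∖ {x}`; there `G △ F₀` coincides with `G △ F`. In `G △ F₀` the vertex `x` is
still a hub of unique color, so joining it back (K2) yields an hc-cograph. By minimality
`|F| ≤ |F₀|`, hence `F = F₀`.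
-/

namespace RBMGPaper

variable {V : Type*} {C : Type*}

/-- `HCOn G σ A` asserts that the subgraph of the vertex-colored graph `(G, σ)` induced on the
vertex set `A` is a hierarchically colored cograph, built recursively via (K1)–(K3). -/
inductive HCOn (G : SimpleGraph V) (σ : V → C) : Set V → Prop
  | single (v : V) : HCOn G σ {v}
  | join (A B : Set V) (hA : A.Nonempty) (hB : B.Nonempty) (hdisj : Disjoint A B)
      (hadj : ∀ a ∈ A, ∀ b ∈ B, G.Adj a b)
      (hcol : Disjoint (σ '' A) (σ '' B))
      (h1 : HCOn G σ A) (h2 : HCOn G σ B) : HCOn G σ (A ∪ B)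
  | union (A B : Set V) (hA : A.Nonempty) (hB : B.Nonempty) (hdisj : Disjoint A B)
      (hadj : ∀ a ∈ A, ∀ b ∈ B, ¬ G.Adj a b)
      (hcol : σ '' A ⊆ σ '' B ∨ σ '' B ⊆ σ '' A)
      (h1 : HCOn G σ A) (h2 : HCOn G σ B) : HCOn G σ (A ∪ B)

/-- `(G, σ)` is a hierarchically colored cograph (hc-cograph). -/
def IsHCCograph (G : SimpleGraph V) (σ : V → C) : Prop :=
  HCOn G σ Set.univ

/-- `CographOn G A` asserts that the subgraph of `G` induced on `A` is a cograph. -/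
inductive CographOn (G : SimpleGraph V) : Set V → Prop
  | single (v : V) : CographOn G {v}
  | union (A B : Set V) (hA : A.Nonempty) (hB : B.Nonempty) (hdisj : Disjoint A B)
      (hadj : ∀ a ∈ A, ∀ b ∈ B, ¬ G.Adj a b)
      (h1 : CographOn G A) (h2 : CographOn G B) : CographOn G (A ∪ B)
  | join (A B : Set V) (hA : A.Nonempty) (hB : B.Nonempty) (hdisj : Disjoint A B)
      (hadj : ∀ a ∈ A, ∀ b ∈ B, G.Adj a b)
      (h1 : CographOn G A) (h2 : CographOn G B) : CographOn G (A ∪ B)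

/-- `G` is a cograph. -/
def IsCograph (G : SimpleGraph V) : Prop := CographOn G Set.univ

/-- The set `s` induces a biclique (complete bipartite graph, possibly `K₁`) in `G`. -/
def IsBiclique (G : SimpleGraph V) (s : Set V) : Prop :=
  ∃ A B : Set V, s = A ∪ B ∧ Disjoint A B ∧
    ∀ u ∈ s, ∀ v ∈ s, (G.Adj u v ↔ ((u ∈ A ∧ v ∈ B) ∨ (u ∈ B ∧ v ∈ A)))

/-- `G` is a bicluster graph: every connected component is a biclique. -/
def IsBiclusterGraph (G : SimpleGraph V) : Prop :=
  ∀ c : G.ConnectedComponent, IsBiclique G c.supp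

/-- `addHub G` is the graph `G + x`: a new vertex (`none`) adjacent to all vertices of `G`. -/
def addHub (G : SimpleGraph V) : SimpleGraph (Option V) where
  Adj u v :=
    (∃ a b, u = some a ∧ v = some b ∧ G.Adj a b) ∨
    (u = none ∧ ∃ b, v = some b) ∨ ((∃ a, u = some a) ∧ v = none)
  symm := by
    refine ⟨?_⟩
    rintro u v (⟨a, b, rfl, rfl, h⟩ | ⟨rfl, b, rfl⟩ | ⟨⟨a, rfl⟩, rfl⟩)
    · exact Or.inl ⟨b, a, rfl, rfl, h.symm⟩
    · exact Or.inr (Or.inr ⟨⟨b, rfl⟩, rfl⟩)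
    · exact Or.inr (Or.inl ⟨rfl, a, rfl⟩)
  loopless := by
    refine ⟨?_⟩
    rintro u (⟨a, b, rfl, hb, h⟩ | ⟨rfl, b, hb⟩ | ⟨⟨a, rfl⟩, hb⟩)
    · exact G.irrefl (Option.some_injective V hb ▸ h)
    · exact nomatch hb
    · exact nomatch hb

theorem _root_.Set.Nonempty.union_rec {P : Set V → Prop} {A B : Set V}
    (hA : A.Nonempty → P A) (hB : B.Nonempty → P B)
    (hAB : A.Nonempty → B.Nonempty → P (A ∪ B)) (h : (A ∪ B).Nonempty) : P (A ∪ B) := by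
  rcases A.eq_empty_or_nonempty with rfl | hA'
  · rw [Set.empty_union] at h ⊢; exact hB h
  rcases B.eq_empty_or_nonempty with rfl | hB'
  · rw [Set.union_empty]; exact hA hA'
  exact hAB hA' hB'

theorem _root_.Set.image_diff_singleton_subset_of_color_unique {σ : V → C} {A B : Set V} {x : V}
    (hx : ∀ a ∈ A, a ≠ x → σ a ≠ σ x) (h : σ '' A ⊆ σ '' B) :
    σ '' (A \ {x}) ⊆ σ '' (B \ {x}) := by
  rintro _ ⟨a, ⟨ha, hax⟩, rfl⟩
  obtain ⟨b, hb, hba⟩ := h ⟨a, ha, rfl⟩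
  -- `b = x` would give `a` the color of `x`
  exact ⟨b, ⟨hb, fun hbx => hx a ha hax (hba ▸ congrArg σ hbx)⟩, hba⟩

namespace HCOn

variable {G : SimpleGraph V} {σ : V → C} {A : Set V}

theorem nonempty (h : HCOn G σ A) : A.Nonempty := by
  induction h with
  | single v => exact Set.singleton_nonempty v
  | join A B hA => exact hA.mono Set.subset_union_left
  | union A B hA => exact hA.mono Set.subset_union_left

theorem congr {G' : SimpleGraph V} (h : HCOn G σ A)
    (hG : ∀ u ∈ A, ∀ v ∈ A, G.Adj u v ↔ G'.Adj u v) : HCOn G' σ A := by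
  induction h with
  | single v => exact .single v
  | join A B hA hB hdisj hadj hcol _ _ ih₁ ih₂ =>
    exact .join A B hA hB hdisj (fun a ha b hb => (hG a (.inl ha) b (.inr hb)).1 (hadj a ha b hb))
      hcol (ih₁ fun u hu v hv => hG u (.inl hu) v (.inl hv))
      (ih₂ fun u hu v hv => hG u (.inr hu) v (.inr hv))
  | union A B hA hB hdisj hadj hcol _ _ ih₁ ih₂ =>
    exact .union A B hA hB hdisj
      (fun a ha b hb hab => hadj a ha b hb ((hG a (.inl ha) b (.inr hb)).2 hab))
      hcol (ih₁ fun u hu v hv => hG u (.inl hu) v (.inl hv))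
      (ih₂ fun u hu v hv => hG u (.inr hu) v (.inr hv))

theorem diff_singleton {x : V} (h : HCOn G σ A) (hx : ∀ a ∈ A, a ≠ x → σ a ≠ σ x)
    (hne : (A \ {x}).Nonempty) : HCOn G σ (A \ {x}) := by
  induction h with
  | single v =>
    rw [Set.sdiff_singleton_eq_self fun hx' => hne.ne_empty (by simp_all)]
    exact .single v
  | join A B hA hB hdisj hadj hcol _ _ ih₁ ih₂ =>
    have hxA : ∀ a ∈ A, a ≠ x → σ a ≠ σ x := fun a ha => hx a (.inl ha)
    have hxB : ∀ b ∈ B, b ≠ x → σ b ≠ σ x := fun b hb => hx b (.inr hb)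
    rw [Set.union_sdiff_distrib] at hne ⊢
    exact hne.union_rec (ih₁ hxA) (ih₂ hxB)
      fun hA' hB' => .join _ _ hA' hB' (hdisj.mono Set.sdiff_subset Set.sdiff_subset)
        (fun a ha b hb => hadj a ha.1 b hb.1)
        (hcol.mono (Set.image_mono Set.sdiff_subset) (Set.image_mono Set.sdiff_subset))
        (ih₁ hxA hA') (ih₂ hxB hB')
  | union A B hA hB hdisj hadj hcol _ _ ih₁ ih₂ =>
    have hxA : ∀ a ∈ A, a ≠ x → σ a ≠ σ x := fun a ha => hx a (.inl ha)
    have hxB : ∀ b ∈ B, b ≠ x → σ b ≠ σ x := fun b hb => hx b (.inr hb)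
    rw [Set.union_sdiff_distrib] at hne ⊢
    exact hne.union_rec (ih₁ hxA) (ih₂ hxB)
      fun hA' hB' => .union _ _ hA' hB' (hdisj.mono Set.sdiff_subset Set.sdiff_subset)
        (fun a ha b hb => hadj a ha.1 b hb.1)
        (hcol.imp (Set.image_diff_singleton_subset_of_color_unique hxA)
          (Set.image_diff_singleton_subset_of_color_unique hxB))
        (ih₁ hxA hA') (ih₂ hxB hB')

theorem insert_hub {x : V} (h : HCOn G σ A) (hxA : x ∉ A) (hadj : ∀ v ∈ A, G.Adj x v)
    (hcol : σ x ∉ σ '' A) : HCOn G σ (insert x A) := by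
  rw [Set.insert_eq]
  exact .join _ _ (Set.singleton_nonempty x) h.nonempty (Set.disjoint_singleton_left.2 hxA)
    (by simpa using hadj) (by simpa using hcol) (.single x) h

end HCOn

/-- Let `(G, σ)` be a properly colored graph with a hub-vertex `x`, and let `F`
be a minimum-cardinality set of unordered vertex pairs such that `(G ∆ F, σ)` is an hc-cograph.
Then `F` contains no pair incident to `x`. -/
theorem optimal_hc_edit_avoids_hub [Fintype V] (G : SimpleGraph V) (σ : V → C) (x : V)
    (hprop : ∀ u v : V, G.Adj u v → σ u ≠ σ v)
    (hhub : ∀ v : V, v ≠ x → G.Adj x v)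
    (F : Set (Sym2 V)) (hFd : ∀ e ∈ F, ¬ e.IsDiag)
    (hF : IsHCCograph (SimpleGraph.fromEdgeSet (symmDiff G.edgeSet F)) σ)
    (hmin : ∀ F' : Set (Sym2 V), (∀ e ∈ F', ¬ e.IsDiag) →
      IsHCCograph (SimpleGraph.fromEdgeSet (symmDiff G.edgeSet F')) σ →
      F.ncard ≤ F'.ncard) :
    ∀ e ∈ F, x ∉ e := by
  intro e he hxe
  set F₀ : Set (Sym2 V) := {f ∈ F | x ∉ f}
  have hlt : F₀.ncard < F.ncard :=
    Set.ncard_lt_ncard ⟨Set.sep_subset _ _, fun h => (h he).2 hxe⟩ F.toFinite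
  have hxcol : ∀ v, v ≠ x → σ v ≠ σ x := fun v hv h => hprop x v (hhub v hv) h.symm
  have hrest : (Set.univ \ {x} : Set V).Nonempty :=
    ⟨Sym2.Mem.other hxe, trivial, Sym2.other_ne (hFd e he) hxe⟩
  have hagree : ∀ u ∈ Set.univ \ {x}, ∀ v ∈ Set.univ \ {x},
      (SimpleGraph.fromEdgeSet (symmDiff G.edgeSet F)).Adj u v ↔
        (SimpleGraph.fromEdgeSet (symmDiff G.edgeSet F₀)).Adj u v := by
    rintro u ⟨-, hu⟩ v ⟨-, hv⟩
    have : x ∉ s(u, v) := by simp_all [eq_comm]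
    simp [F₀, Set.mem_symmDiff, this]
  have hhub₀ : ∀ v ∈ Set.univ \ {x}, (SimpleGraph.fromEdgeSet (symmDiff G.edgeSet F₀)).Adj x v := by
    rintro v ⟨-, hv⟩
    simp_all [F₀, Set.mem_symmDiff, eq_comm]
  have hF₀ : IsHCCograph (SimpleGraph.fromEdgeSet (symmDiff G.edgeSet F₀)) σ := by
    have := ((hF.diff_singleton (fun v _ => hxcol v) hrest).congr hagree).insert_hub
      (by simp) hhub₀ (by simpa using hxcol)
    simpa [IsHCCograph] using this
  exact hlt.not_ge (hmin F₀ (fun f hf => hFd f hf.1) hF₀)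

end RBMGPaper
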